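/- The complete list of solutions (d; m_1, ..., m_k) with 1 ≤ k ≤ 8, d ≥ 1, and m_1 ≥ ... ≥ m_k ≥ 1 of the system ∑ m_i = 3d - 1 and ∑ m_i² = d² + 1 is: (1; 1, 1), (2; 1,1,1,1,1), (3; 2,1,1,1,1,1,1), (4; 2,2,2,1,1,1,1,1), (5; 2,2,2,2,2,2,1,1), and (6; 3,2,2,2,2,2,2,2). -/

import Mathlib

/-!
By Cauchy–Schwarz, `(3d - 1)² = (∑ mᵢ)² ≤ k ∑ mᵢ² ≤ 8 (d² + 1)`, which forces `d ≤ 7`; and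
`mᵢ² ≤ d² + 1` gives `mᵢ ≤ d`. So `m` is a partition of `3d - 1` into at most eight parts, each at
most `d`, with `d ≤ 7`: a finite search, which is carried out by `decide`.
-/

theorem List.sq_sum_le_length_mul_sum_sq {α : Type*} [Semiring α] [LinearOrder α]
    [IsStrictOrderedRing α] [ExistsAddOfLE α] (l : List α) :
    l.sum ^ 2 ≤ l.length * (l.map (· ^ 2)).sum := by
  have := sq_sum_le_card_mul_sum_sq (s := Finset.univ) (f := fun i : Fin l.length => l[(i : ℕ)])
  rwa [Fin.sum_univ_getElem, Fin.sum_univ_fun_getElem l (· ^ 2), Finset.card_univ,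
    Fintype.card_fin] at this

def boundedPartitions : ℕ → ℕ → ℕ → List (List ℕ)
  | _, 0, _ => [[]]
  | _, _ + 1, 0 => []
  | b, n + 1, len + 1 =>
    (List.range' 1 (min b (n + 1))).flatMap fun h =>
      (boundedPartitions h (n + 1 - h) len).map (h :: ·)

theorem mem_boundedPartitions {m : List ℕ} {b n len : ℕ} (hsort : m.Pairwise (· ≥ ·))
    (hbound : ∀ x ∈ m, 1 ≤ x ∧ x ≤ b) (hsum : m.sum = n) (hlen : m.length ≤ len) :
    m ∈ boundedPartitions b n len := by
  induction m generalizing b n len with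
  | nil => subst hsum; cases len <;> simp [boundedPartitions]
  | cons h t ih =>
    obtain ⟨hh1, hhb⟩ := hbound h List.mem_cons_self
    rw [List.pairwise_cons] at hsort
    rw [List.sum_cons] at hsum
    obtain ⟨len, rfl⟩ : ∃ len', len = len' + 1 := ⟨len - 1, by simp at hlen; omega⟩
    obtain ⟨n, rfl⟩ : ∃ n', n = n' + 1 := ⟨n - 1, by omega⟩
    have ht : t ∈ boundedPartitions h (n + 1 - h) len :=
      ih hsort.2 (fun x hx => ⟨(hbound x (List.mem_cons_of_mem _ hx)).1, hsort.1 x hx⟩)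
        (by omega) (by simpa using hlen)
    simp only [boundedPartitions, List.mem_flatMap, List.mem_range'_1]
    exact ⟨h, by omega, List.mem_map_of_mem ht⟩

def solutions : List (ℕ × List ℕ) :=
  [(1, [1, 1]), (2, [1, 1, 1, 1, 1]), (3, [2, 1, 1, 1, 1, 1, 1]),
    (4, [2, 2, 2, 1, 1, 1, 1, 1]), (5, [2, 2, 2, 2, 2, 2, 1, 1]),
    (6, [3, 2, 2, 2, 2, 2, 2, 2])]

set_option maxRecDepth 100000 in
theorem mem_solutions_of_mem_boundedPartitions :
    ∀ d < 8, ∀ m ∈ boundedPartitions d (3 * d - 1) 8,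
      (m.map (· ^ 2)).sum = d ^ 2 + 1 → (d, m) ∈ solutions := by
  decide

theorem le_seven_of_sq_le {s d : ℕ} (hsd : s + 1 = 3 * d) (h : s ^ 2 ≤ 8 * (d ^ 2 + 1)) :
    d ≤ 7 := by
  nlinarith

theorem le_of_sq_le_sq_add_one {x d : ℕ} (hd : 1 ≤ d) (h : x ^ 2 ≤ d ^ 2 + 1) : x ≤ d := by
  nlinarith

theorem diophantine_complete_list_general (d : ℕ) (m : List ℕ)
    (hk8 : m.length ≤ 8)
    (hsort : m.Pairwise (· ≥ ·)) (hpos : ∀ x ∈ m, 1 ≤ x)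
    (h1 : ((m.map (Int.ofNat)).sum) = 3 * (d : ℤ) - 1)
    (h2 : ((m.map (fun x => (x : ℤ) ^ 2)).sum) = (d : ℤ) ^ 2 + 1) :
    (d, m) ∈ [(1, [1, 1]), (2, [1, 1, 1, 1, 1]), (3, [2, 1, 1, 1, 1, 1, 1]),
      (4, [2, 2, 2, 1, 1, 1, 1, 1]), (5, [2, 2, 2, 2, 2, 2, 1, 1]),
      (6, [3, 2, 2, 2, 2, 2, 2, 2])] := by
  have hsum : m.sum + 1 = 3 * d := by
    have : (m.sum : ℤ) = 3 * d - 1 := by rw [Nat.cast_list_sum]; exact h1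
    omega
  have hsq : (m.map (· ^ 2)).sum = d ^ 2 + 1 := by
    -- `h2` elaborates with `m` lifted to `List ℤ` through the list monad
    simp only [List.pure_def, List.bind_eq_flatMap, ← List.map_eq_flatMap, List.map_map] at h2
    rw [← Nat.cast_inj (R := ℤ), Nat.cast_list_sum, List.map_map]
    exact_mod_cast h2
  have hd7 : d ≤ 7 := le_seven_of_sq_le hsum <| calc
    m.sum ^ 2 ≤ m.length * (m.map (· ^ 2)).sum := m.sq_sum_le_length_mul_sum_sq
    _ ≤ 8 * (d ^ 2 + 1) := by rw [hsq]; gcongr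
  have hle : ∀ x ∈ m, x ≤ d := fun x hx =>
    le_of_sq_le_sq_add_one (by omega) (hsq ▸ List.le_sum_of_mem (List.mem_map_of_mem hx))
  exact mem_solutions_of_mem_boundedPartitions d (by omega) m
    (mem_boundedPartitions hsort (fun x hx => ⟨hpos x hx, hle x hx⟩) (by omega) hk8) hsq

/-- The complete list of solutions `(d; m_1, ..., m_k)` with `1 ≤ k ≤ 8`, `d ≥ 1`,
and `m_1 ≥ ... ≥ m_k ≥ 1` of the system `∑ m_i = 3d - 1` and `∑ m_i² = d² + 1`. -/
theorem diophantine_complete_list (d : ℕ) (m : List ℕ)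
    (hk1 : 1 ≤ m.length) (hk8 : m.length ≤ 8) (hd : 1 ≤ d)
    (hsort : m.Pairwise (· ≥ ·)) (hpos : ∀ x ∈ m, 1 ≤ x)
    (h1 : ((m.map (Int.ofNat)).sum) = 3 * (d : ℤ) - 1)
    (h2 : ((m.map (fun x => (x : ℤ) ^ 2)).sum) = (d : ℤ) ^ 2 + 1) :
    (d, m) ∈ [(1, [1, 1]), (2, [1, 1, 1, 1, 1]), (3, [2, 1, 1, 1, 1, 1, 1]),
      (4, [2, 2, 2, 1, 1, 1, 1, 1]), (5, [2, 2, 2, 2, 2, 2, 1, 1]),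
      (6, [3, 2, 2, 2, 2, 2, 2, 2])] :=
  diophantine_complete_list_general d m hk8 hsort hpos h1 h2
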